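/- Let Φ be an IFS on ℝ satisfying the open set condition, with self-similar set F. For every m ∈ ℕ₀ and every nonempty Λ ⊆ Σ^m, the set U_Λ = ⋃_{ω∈Σ*} φ_ω(⋃_{u∈Λ} φ_u(I)) satisfies U_Λ ∩ F ≠ ∅ and ∂U_Λ ⊆ F. -/

import Mathlib

open Set Filter MeasureTheory Metric Topology

/-- An iterated function system (IFS) on `ℝ`: a finite family of contracting
similarities `φ i` with similarity ratios `r i ∈ (0,1)`. -/
structure IFS (N : ℕ) where
  φ : Fin N → ℝ → ℝ
  r : Fin N → ℝ
  r_pos : ∀ i, 0 < r i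
  r_lt_one : ∀ i, r i < 1
  similar : ∀ i x y, |φ i x - φ i y| = r i * |x - y|

namespace IFS

variable {N : ℕ}

/-- The natural action `ΦA = ⋃ i φ i(A)` of an IFS on subsets of `ℝ`. -/
def map (Φ : IFS N) (A : Set ℝ) : Set ℝ := ⋃ i, Φ.φ i '' A

/-- A nonempty open set `O` is feasible for `Φ` if `φ i (O) ⊆ O` for all `i`
and the images `φ i (O)` are pairwise disjoint. -/
def Feasible (Φ : IFS N) (O : Set ℝ) : Prop :=
  O.Nonempty ∧ IsOpen O ∧ (∀ i, Φ.φ i '' O ⊆ O) ∧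
    ∀ i j, i ≠ j → Disjoint (Φ.φ i '' O) (Φ.φ j '' O)

/-- The open set condition: existence of a feasible open set. -/
def OSC (Φ : IFS N) : Prop := ∃ O : Set ℝ, Φ.Feasible O

/-- `F` is the self-similar set (attractor) of `Φ`: the (unique) nonempty
compact set with `ΦF = F`. -/
def IsAttractor (Φ : IFS N) (F : Set ℝ) : Prop :=
  F.Nonempty ∧ IsCompact F ∧ Φ.map F = F

/-- `Φ` is lattice if the additive subgroup of `ℝ` generated by the `log (r i)`
is discrete, equivalently all `log (r i)` lie in `aℤ` for some `a > 0`. -/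
def IsLattice (Φ : IFS N) : Prop :=
  ∃ a : ℝ, 0 < a ∧ ∀ i, ∃ k : ℤ, Real.log (Φ.r i) = k * a

/-- `ρ = e^{-a}` is the base of the lattice IFS `Φ`, where `a > 0` is maximal
with `log (r i) ∈ aℤ` for all `i`. -/
def IsLatticeBase (Φ : IFS N) (ρ : ℝ) : Prop :=
  ∃ a : ℝ, 0 < a ∧ ρ = Real.exp (-a) ∧
    (∀ i, ∃ k : ℤ, Real.log (Φ.r i) = k * a) ∧
    ∀ b : ℝ, 0 < b → (∀ i, ∃ k : ℤ, Real.log (Φ.r i) = k * b) → b ≤ a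

/-- For a finite word `ω = ω₁⋯ωₙ`, the composition `φ_ω = φ_{ω₁} ∘ ⋯ ∘ φ_{ωₙ}`
(the empty word giving the identity). -/
def wordMap (Φ : IFS N) (ω : List (Fin N)) : ℝ → ℝ :=
  ω.foldr (fun i f => Φ.φ i ∘ f) id

end IFS

/-- `y` is the unique nearest point of `x` in `F`. -/
def UniqueNearest (F : Set ℝ) (x y : ℝ) : Prop :=
  y ∈ F ∧ dist x y = Metric.infDist x F ∧
    ∀ z ∈ F, dist x z = Metric.infDist x F → z = y

/-- The projection condition for a feasible open set `O`:
`φ i (O) ⊆ closure (π_F⁻¹ (φ i (F)))` for all `i`, where `π_F` is the metric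
projection onto `F` (defined where the nearest point in `F` is unique). -/
def IFS.ProjCond {N : ℕ} (Φ : IFS N) (F O : Set ℝ) : Prop :=
  ∀ i, Φ.φ i '' O ⊆ closure {x : ℝ | ∃ y, UniqueNearest F x y ∧ y ∈ Φ.φ i '' F}

/-- `F` has Minkowski dimension `D`:
`1 - log λ(F_ε) / log ε → D` as `ε → 0+`. -/
def HasMinkowskiDim (F : Set ℝ) (D : ℝ) : Prop :=
  Filter.Tendsto
    (fun ε : ℝ => 1 - Real.log (volume (Metric.cthickening ε F)).toReal / Real.log ε)
    (𝓝[>] (0:ℝ)) (𝓝 D)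

/-- `F` (of Minkowski dimension `D`) is Minkowski measurable:
`ε^(D-1) λ(F_ε)` converges to a positive finite limit as `ε → 0+`. -/
def MinkowskiMeasurable (F : Set ℝ) (D : ℝ) : Prop :=
  ∃ M : ℝ, 0 < M ∧
    Filter.Tendsto (fun ε : ℝ => ε ^ (D - 1) * (volume (Metric.cthickening ε F)).toReal)
      (𝓝[>] (0:ℝ)) (𝓝 M)

/-- The set `U_Λ = ⋃_{ω ∈ Σ*} φ_ω (⋃_{u ∈ Λ} φ_u (I))`, where `I` is the
interior of the convex hull of `F`. -/
def IFS.ULambda {N : ℕ} (Φ : IFS N) (F : Set ℝ) (Λ : Set (List (Fin N))) : Set ℝ :=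
  ⋃ ω : List (Fin N),
    Φ.wordMap ω '' (⋃ u ∈ Λ, Φ.wordMap u '' interior (convexHull ℝ F))


/-!
Every `φ_ω` is an affine homeomorphism of `ℝ` mapping `F` into itself, so each piece
`φ_ω φ_u (I)` of `U_Λ` has its frontier in `F`. A point outside the closed set `F` has a connected
neighbourhood avoiding `F`; as soon as it meets a piece it lies inside that piece, hence a point
of `closure U_Λ \ F` is interior to `U_Λ`.

For `U_Λ ∩ F ≠ ∅` one needs a point of `F` strictly inside its convex hull. Under the OSC `F` is
not a single point: all `φ_i` would fix it and therefore commute, while `φ_i φ_j (O)` must lie in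
the disjoint sets `φ_i (O)` and `φ_j (O)`. A contraction then sends the two extreme points of `F`
to two distinct points of `F` at distance less than the diameter of `F`, and these cannot both be
extreme.
-/

theorem exists_eq_mul_add_of_abs_sub_eq {f : ℝ → ℝ} {r : ℝ}
    (hf : ∀ x y, |f x - f y| = r * |x - y|) : ∃ c, |c| = r ∧ ∀ x, f x = c * x + f 0 := by
  refine ⟨f 1 - f 0, by simpa using hf 1 0, fun x => ?_⟩
  have hsq : ∀ a b, (f a - f b) ^ 2 = r ^ 2 * (a - b) ^ 2 := fun a b => by
    rw [← sq_abs, hf, mul_pow, sq_abs]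
  -- polarization of the three distances between `f 0`, `f 1` and `f x`
  have key : (f 1 - f 0) * (f x - f 0 - (f 1 - f 0) * x) = 0 := by
    linear_combination (hsq x 0 + hsq 1 0 - hsq x 1) / 2 - x * hsq 1 0
  rcases mul_eq_zero.mp key with h | h
  · have hr : r ^ 2 = 0 := by simpa [h] using (hsq 1 0).symm
    have hx : (f x - f 0) ^ 2 = 0 := by rw [hsq, hr, zero_mul]
    rw [h, zero_mul, zero_add]
    linarith [pow_eq_zero_iff two_ne_zero |>.mp hx]
  · linarith

theorem isHomeomorph_mul_add {c : ℝ} (hc : c ≠ 0) (d : ℝ) :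
    IsHomeomorph fun x : ℝ => c * x + d :=
  ((Homeomorph.mulLeft₀ c hc).trans (Homeomorph.addRight d)).isHomeomorph

theorem IsHomeomorph.frontier_image_subset_of_mapsTo {X : Type*} [TopologicalSpace X]
    {f : X → X} {F s : Set X} (hf : IsHomeomorph f) (hfF : MapsTo f F F)
    (hs : frontier s ⊆ F) : frontier (f '' s) ⊆ F := by
  rw [← hf.image_frontier]
  exact (image_mono hs).trans hfF.image_subset

theorem IsPreconnected.subset_interior_of_disjoint_frontier {X : Type*} [TopologicalSpace X]
    {B V : Set X} (hB : IsPreconnected B) (hBV : Disjoint B (frontier V))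
    (hne : (B ∩ V).Nonempty) : B ⊆ interior V := by
  have hcl : closure V ∩ B ⊆ interior V := fun x ⟨hxV, hxB⟩ =>
    ((closure_eq_interior_union_frontier V ▸ hxV).resolve_right
      (disjoint_left.mp hBV hxB))
  obtain ⟨y, hyB, hyV⟩ := hne
  refine hB.subset_of_closure_inter_subset isOpen_interior
    ⟨y, hyB, hcl ⟨subset_closure hyV, hyB⟩⟩ ?_
  exact (inter_subset_inter_left _ (closure_mono interior_subset)).trans hcl

theorem frontier_iUnion_subset_of_isClosed {X : Type*} {ι : Sort*} [TopologicalSpace X]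
    [LocallyConnectedSpace X] {F : Set X} (hF : IsClosed F) {V : ι → Set X}
    (hV : ∀ i, frontier (V i) ⊆ F) : frontier (⋃ i, V i) ⊆ F := by
  intro x hx
  by_contra hxF
  set B := connectedComponentIn Fᶜ x
  have hBF : B ⊆ Fᶜ := connectedComponentIn_subset _ _
  obtain ⟨y, hyB, hyV⟩ := mem_closure_iff.mp hx.1 B hF.isOpen_compl.connectedComponentIn
    (mem_connectedComponentIn hxF)
  obtain ⟨i, hyi⟩ := mem_iUnion.mp hyV
  have hBi : B ⊆ interior (V i) :=
    isPreconnected_connectedComponentIn.subset_interior_of_disjoint_frontier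
      (disjoint_of_subset_left hBF (disjoint_compl_left.mono_right (hV i))) ⟨y, hyB, hyi⟩
  exact hx.2 (interior_mono (subset_iUnion V i) (hBi (mem_connectedComponentIn hxF)))

theorem IsCompact.convexHull_eq_Icc {F : Set ℝ} (hF : IsCompact F) (hne : F.Nonempty) :
    convexHull ℝ F = Icc (sInf F) (sSup F) := by
  have hsub : F ⊆ Icc (sInf F) (sSup F) := fun x hx =>
    ⟨csInf_le hF.bddBelow hx, le_csSup hF.bddAbove hx⟩
  refine (convexHull_min hsub (convex_Icc _ _)).antisymm ?_
  rw [← segment_eq_Icc (csInf_le_csSup hne hF.bddBelow hF.bddAbove)]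
  exact segment_subset_convexHull (hF.sInf_mem hne) (hF.sSup_mem hne)

theorem IsCompact.frontier_interior_convexHull_subset {F : Set ℝ} (hF : IsCompact F) :
    frontier (interior (convexHull ℝ F)) ⊆ F := by
  rcases F.eq_empty_or_nonempty with rfl | hne
  · simp
  refine frontier_interior_subset.trans ?_
  rw [hF.convexHull_eq_Icc hne, frontier_Icc (csInf_le_csSup hne hF.bddBelow hF.bddAbove)]
  exact insert_subset (hF.sInf_mem hne) (singleton_subset_iff.mpr (hF.sSup_mem hne))

theorem inter_Ioo_nonempty_of_abs_sub_lt {F : Set ℝ} {a b x y : ℝ} (hF : F ⊆ Icc a b)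
    (hx : x ∈ F) (hy : y ∈ F) (hxy : x ≠ y) (h : |x - y| < b - a) :
    (F ∩ Ioo a b).Nonempty := by
  by_contra hcon
  have hend : ∀ z ∈ F, z = a ∨ z = b := fun z hz => by
    by_contra! hz'
    exact hcon ⟨z, hz, lt_of_le_of_ne (hF hz).1 hz'.1.symm, lt_of_le_of_ne (hF hz).2 hz'.2⟩
  rcases hend x hx with rfl | rfl <;> rcases hend y hy with rfl | rfl <;>
    first | exact hxy rfl | linarith [le_abs_self (x - y), abs_sub_comm x y, le_abs_self (y - x)]

theorem inter_interior_convexHull_nonempty_of_mapsTo {F : Set ℝ} (hF : IsCompact F)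
    (hnt : F.Nontrivial) {f : ℝ → ℝ} {r : ℝ} (hr₀ : 0 < r) (hr₁ : r < 1)
    (hf : ∀ x y, |f x - f y| = r * |x - y|) (hfF : MapsTo f F F) :
    (F ∩ interior (convexHull ℝ F)).Nonempty := by
  obtain ⟨x, hx, y, hy, hxy⟩ := hnt.exists_lt
  rw [hF.convexHull_eq_Icc hnt.nonempty, interior_Icc]
  have hab : sInf F < sSup F :=
    (csInf_le hF.bddBelow hx).trans_lt (hxy.trans_le (le_csSup hF.bddAbove hy))
  have hdist : |f (sInf F) - f (sSup F)| = r * (sSup F - sInf F) := by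
    rw [hf, abs_sub_comm, abs_of_pos (sub_pos.mpr hab)]
  refine inter_Ioo_nonempty_of_abs_sub_lt
    (fun z hz => ⟨csInf_le hF.bddBelow hz, le_csSup hF.bddAbove hz⟩)
    (hfF (hF.sInf_mem hnt.nonempty)) (hfF (hF.sSup_mem hnt.nonempty)) ?_ ?_
  · intro heq
    rw [heq, sub_self, abs_zero] at hdist
    nlinarith
  · rw [hdist]
    nlinarith

namespace IFS

variable {N : ℕ} (Φ : IFS N)

theorem exists_eq_mul_add (i : Fin N) : ∃ c ≠ 0, ∀ x, Φ.φ i x = c * x + Φ.φ i 0 := by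
  obtain ⟨c, hc, hcf⟩ := exists_eq_mul_add_of_abs_sub_eq (Φ.similar i)
  exact ⟨c, fun h => (Φ.r_pos i).ne' (by rw [← hc, h, abs_zero]), hcf⟩

theorem isHomeomorph_φ (i : Fin N) : IsHomeomorph (Φ.φ i) := by
  obtain ⟨c, hc, hcf⟩ := Φ.exists_eq_mul_add i
  rw [funext hcf]
  exact isHomeomorph_mul_add hc _

@[simp]
theorem wordMap_nil : Φ.wordMap [] = id := rfl

theorem isHomeomorph_wordMap (w : List (Fin N)) : IsHomeomorph (Φ.wordMap w) := by
  induction w with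
  | nil => exact IsHomeomorph.id
  | cons i w ih => exact (Φ.isHomeomorph_φ i).comp ih

theorem commute_of_apply_eq_self {i j : Fin N} {q : ℝ} (hi : Φ.φ i q = q) (hj : Φ.φ j q = q) :
    Function.Commute (Φ.φ i) (Φ.φ j) := by
  obtain ⟨a, -, ha⟩ := Φ.exists_eq_mul_add i
  obtain ⟨b, -, hb⟩ := Φ.exists_eq_mul_add j
  have hi0 : Φ.φ i 0 = q - a * q := by linarith [ha q]
  have hj0 : Φ.φ j 0 = q - b * q := by linarith [hb q]
  intro x
  rw [ha (Φ.φ j x), hb (Φ.φ i x), hb x, ha x, hi0, hj0]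
  ring

variable {Φ}

theorem Feasible.not_commute {O : Set ℝ} (hO : Φ.Feasible O) {i j : Fin N} (hij : i ≠ j) :
    ¬ Function.Commute (Φ.φ i) (Φ.φ j) := by
  obtain ⟨⟨x, hx⟩, -, hsub, hdisj⟩ := hO
  intro hcomm
  refine disjoint_left.mp (hdisj i j hij) ⟨Φ.φ j x, hsub j ⟨x, hx, rfl⟩, rfl⟩ ?_
  rw [hcomm x]
  exact ⟨Φ.φ i x, hsub i ⟨x, hx, rfl⟩, rfl⟩

variable {F : Set ℝ}

theorem IsAttractor.mapsTo_φ (hF : Φ.IsAttractor F) (i : Fin N) : MapsTo (Φ.φ i) F F :=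
  fun x hx => hF.2.2 ▸ mem_iUnion.mpr ⟨i, x, hx, rfl⟩

theorem IsAttractor.mapsTo_wordMap (hF : Φ.IsAttractor F) (w : List (Fin N)) :
    MapsTo (Φ.wordMap w) F F := by
  induction w with
  | nil => exact mapsTo_id F
  | cons i w ih => exact (hF.mapsTo_φ i).comp ih

theorem IsAttractor.nontrivial (hN : 2 ≤ N) (hOSC : Φ.OSC) (hF : Φ.IsAttractor F) :
    F.Nontrivial := by
  obtain ⟨q, hq⟩ := hF.1
  refine not_subsingleton_iff.mp fun hss => ?_
  have hfix : ∀ i, Φ.φ i q = q := fun i => hss (hF.mapsTo_φ i hq) hq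
  obtain ⟨O, hO⟩ := hOSC
  exact hO.not_commute (i := ⟨0, by omega⟩) (j := ⟨1, by omega⟩) (by simp)
    (Φ.commute_of_apply_eq_self (hfix _) (hfix _))

theorem ULambda_inter_nonempty (hN : 2 ≤ N) (hOSC : Φ.OSC) (hF : Φ.IsAttractor F)
    {Λ : Set (List (Fin N))} (hΛ : Λ.Nonempty) : (Φ.ULambda F Λ ∩ F).Nonempty := by
  let i : Fin N := ⟨0, by omega⟩
  obtain ⟨z, hzF, hzI⟩ := inter_interior_convexHull_nonempty_of_mapsTo hF.2.1
    (hF.nontrivial hN hOSC) (Φ.r_pos i) (Φ.r_lt_one i) (Φ.similar i) (hF.mapsTo_φ i)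
  obtain ⟨u, hu⟩ := hΛ
  refine ⟨Φ.wordMap u z, mem_iUnion.mpr ⟨[], ?_⟩, hF.mapsTo_wordMap u hzF⟩
  rw [wordMap_nil, image_id]
  exact mem_iUnion₂.mpr ⟨u, hu, mem_image_of_mem _ hzI⟩

theorem frontier_ULambda_subset (hF : Φ.IsAttractor F) (Λ : Set (List (Fin N))) :
    frontier (Φ.ULambda F Λ) ⊆ F := by
  have hcl := hF.2.1.isClosed
  have hpiece (ω u : List (Fin N)) :
      frontier (Φ.wordMap ω '' (Φ.wordMap u '' interior (convexHull ℝ F))) ⊆ F :=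
    (Φ.isHomeomorph_wordMap ω).frontier_image_subset_of_mapsTo (hF.mapsTo_wordMap ω)
      ((Φ.isHomeomorph_wordMap u).frontier_image_subset_of_mapsTo (hF.mapsTo_wordMap u)
        hF.2.1.frontier_interior_convexHull_subset)
  simp only [ULambda, image_iUnion₂]
  exact frontier_iUnion_subset_of_isClosed hcl fun ω => frontier_iUnion_subset_of_isClosed hcl
    fun u => frontier_iUnion_subset_of_isClosed hcl fun _ => hpiece ω u

end IFS

theorem ULambda_strong_compatible_general {N : ℕ} (hN : 2 ≤ N) (Φ : IFS N) (F : Set ℝ)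
    (hOSC : Φ.OSC) (hF : Φ.IsAttractor F) (Λ : Set (List (Fin N)))
    (hΛne : Λ.Nonempty) :
    (Φ.ULambda F Λ ∩ F).Nonempty ∧ frontier (Φ.ULambda F Λ) ⊆ F :=
  ⟨Φ.ULambda_inter_nonempty hN hOSC hF hΛne, Φ.frontier_ULambda_subset hF Λ⟩

/-- Under OSC, for every `m ∈ ℕ₀` and every nonempty `Λ ⊆ Σ^m`,
the set `U_Λ` intersects `F` and has boundary contained in `F`. -/
theorem ULambda_strong_compatible {N : ℕ} (hN : 2 ≤ N) (Φ : IFS N) (F : Set ℝ)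
    (hOSC : Φ.OSC) (hF : Φ.IsAttractor F) (m : ℕ) (Λ : Set (List (Fin N)))
    (hΛne : Λ.Nonempty) (hΛ : ∀ u ∈ Λ, u.length = m) :
    (Φ.ULambda F Λ ∩ F).Nonempty ∧ frontier (Φ.ULambda F Λ) ⊆ F :=
  ULambda_strong_compatible_general hN Φ F hOSC hF Λ hΛne
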